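/- Lemma (positivity of the Reissner–Nordström d'Alembertian of Ω²r^{−α} for large α). For every Δ > 0 and every R₁ > r₊ there exists α̃ > 1 such that for all α ≥ α̃ and all r ≥ R₁: □(s ↦ Ω²(s)·s^{−α})(r) > Δ·r^{−α−2}, where □ denotes the radial d'Alembertian defined below. -/

import Mathlib

noncomputable section

open MeasureTheory Filter Topology
open scoped ENNReal

namespace RN

/-- `Ω²(r) = 1 − 2M/r + ρ²/r²`. -/
def Omega2 (M ρ r : ℝ) : ℝ := 1 - 2*M/r + ρ^2/r^2

/-- radius of the event horizon -/
def rPlus (M ρ : ℝ) : ℝ := M + Real.sqrt (M^2 - ρ^2)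

/-- radius of the Cauchy horizon -/
def rMinus (M ρ : ℝ) : ℝ := M - Real.sqrt (M^2 - ρ^2)

/-- `K(r)`, so that `2K(r) = (2/r²)(M − ρ²/r)`. -/
def Kf (M ρ r : ℝ) : ℝ := (M - ρ^2/r) / r^2

/-- tortoise coordinate `r*(r)` -/
def rStar (M ρ r : ℝ) : ℝ :=
  r + Real.log (r - rPlus M ρ) / (2 * Kf M ρ (rPlus M ρ))
    + Real.log (r - rMinus M ρ) / (2 * Kf M ρ (rMinus M ρ))

/-- partial derivative in the first null variable -/
def pdu {E : Type*} [NormedAddCommGroup E] [NormedSpace ℝ E]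
    (f : ℝ → ℝ → E) (u v : ℝ) : E := deriv (fun x => f x v) u

/-- partial derivative in the second null variable -/
def pdv {E : Type*} [NormedAddCommGroup E] [NormedSpace ℝ E]
    (f : ℝ → ℝ → E) (u v : ℝ) : E := deriv (fun x => f u x) v

/-- gauge derivative `D_u = ∂_u + i q₀ A_u` -/
def Dgu (q₀ : ℝ) (Au : ℝ → ℝ → ℝ) (f : ℝ → ℝ → ℂ) (u v : ℝ) : ℂ :=
  pdu f u v + Complex.I * (q₀ : ℂ) * (Au u v : ℂ) * f u v

/-- gauge derivative `D_v = ∂_v + i q₀ A_v` -/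
def Dgv (q₀ : ℝ) (Av : ℝ → ℝ → ℝ) (f : ℝ → ℝ → ℂ) (u v : ℝ) : ℂ :=
  pdv f u v + Complex.I * (q₀ : ℂ) * (Av u v : ℂ) * f u v

/-- A spherically symmetric solution of the Maxwell–charged-scalar-field system
on the Reissner–Nordström exterior, in null coordinates. -/
structure Solution (M ρ q₀ : ℝ) where
  φ : ℝ → ℝ → ℂ
  Q : ℝ → ℝ → ℝ
  Au : ℝ → ℝ → ℝ
  Av : ℝ → ℝ → ℝ
  /-- the area radius `r(u,v)` -/
  rf : ℝ → ℝ → ℝ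
  rf_gt : ∀ u v, rPlus M ρ < rf u v
  rf_star : ∀ u v, rStar M ρ (rf u v) = v - u
  φ_C2 : ContDiff ℝ 2 (fun p : ℝ × ℝ => φ p.1 p.2)
  Q_C2 : ContDiff ℝ 2 (fun p : ℝ × ℝ => Q p.1 p.2)
  Au_C2 : ContDiff ℝ 2 (fun p : ℝ × ℝ => Au p.1 p.2)
  Av_C2 : ContDiff ℝ 2 (fun p : ℝ × ℝ => Av p.1 p.2)
  wave : ∀ u v,
    Dgu q₀ Au (fun a b => Dgv q₀ Av (fun x y => (rf x y : ℂ) * φ x y) a b) u v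
      = ((Omega2 M ρ (rf u v) / rf u v : ℝ) : ℂ) * φ u v *
        (Complex.I * (q₀ : ℂ) * (Q u v : ℂ)
          - ((2*M/(rf u v) : ℝ) : ℂ) + ((2*ρ^2/(rf u v)^2 : ℝ) : ℂ))
  maxwell_u : ∀ u v,
    pdu Q u v = - q₀ * (rf u v)^2 * ((starRingEnd ℂ) (φ u v) * Dgu q₀ Au φ u v).im
  maxwell_v : ∀ u v,
    pdv Q u v = q₀ * (rf u v)^2 * ((starRingEnd ℂ) (φ u v) * Dgv q₀ Av φ u v).im
  potential : ∀ u v,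
    pdu Av u v - pdv Au u v = 2 * Q u v * Omega2 M ρ (rf u v) / (rf u v)^2

variable {M ρ q₀ : ℝ}

namespace Solution

/-- radiation field `ψ = rφ` -/
def ψ (S : Solution M ρ q₀) : ℝ → ℝ → ℂ := fun u v => (S.rf u v : ℂ) * S.φ u v

def Duφ (S : Solution M ρ q₀) : ℝ → ℝ → ℂ := Dgu q₀ S.Au S.φ
def Dvφ (S : Solution M ρ q₀) : ℝ → ℝ → ℂ := Dgv q₀ S.Av S.φ
def Duψ (S : Solution M ρ q₀) : ℝ → ℝ → ℂ := Dgu q₀ S.Au S.ψ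
def Dvψ (S : Solution M ρ q₀) : ℝ → ℝ → ℂ := Dgv q₀ S.Av S.ψ
def Dtφ (S : Solution M ρ q₀) : ℝ → ℝ → ℂ := fun u v => (S.Duφ u v + S.Dvφ u v) / 2
def Drφ (S : Solution M ρ q₀) : ℝ → ℝ → ℂ := fun u v => (S.Dvφ u v - S.Duφ u v) / 2

end Solution

def vR (M ρ R u : ℝ) : ℝ := u + rStar M ρ R
def uRc (M ρ R v : ℝ) : ℝ := v - rStar M ρ R
def u0 (M ρ R : ℝ) : ℝ := - rStar M ρ R / 2
def v0 (M ρ R : ℝ) : ℝ := rStar M ρ R / 2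

/-- the V-shaped foliation domain `D(u₁,u₂)` -/
def Dset (M ρ R u₁ u₂ : ℝ) : Set (ℝ × ℝ) :=
  {p : ℝ × ℝ | u₁ ≤ p.1 ∧ p.1 ≤ u₂ ∧ vR M ρ R p.1 ≤ p.2} ∪
  {p : ℝ × ℝ | vR M ρ R u₁ ≤ p.2 ∧ p.2 ≤ vR M ρ R u₂ ∧ uRc M ρ R p.2 ≤ p.1}

/-- `D(u₁,∞)` -/
def DsetInf (M ρ R u₁ : ℝ) : Set (ℝ × ℝ) := ⋃ u₂ ∈ Set.Ioi u₁, Dset M ρ R u₁ u₂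

namespace Solution

/-- the non-degenerate energy `E(u)` -/
def E (S : Solution M ρ q₀) (R u : ℝ) : ℝ≥0∞ :=
  (∫⁻ u' in Set.Ioi u, ENNReal.ofReal
    ((S.rf u' (vR M ρ R u))^2 * ‖S.Duφ u' (vR M ρ R u)‖^2 / Omega2 M ρ (S.rf u' (vR M ρ R u))))
  + ∫⁻ v in Set.Ioi (vR M ρ R u), ENNReal.ofReal ((S.rf u v)^2 * ‖S.Dvφ u v‖^2)

/-- the degenerate energy `E_deg(u)` -/
def Edeg (S : Solution M ρ q₀) (R u : ℝ) : ℝ≥0∞ :=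
  (∫⁻ u' in Set.Ioi u, ENNReal.ofReal ((S.rf u' (vR M ρ R u))^2 * ‖S.Duφ u' (vR M ρ R u)‖^2))
  + ∫⁻ v in Set.Ioi (vR M ρ R u), ENNReal.ofReal ((S.rf u v)^2 * ‖S.Dvφ u v‖^2)

/-- the `r^p`-weighted energy `E_p[ψ](u)` -/
def Ep (S : Solution M ρ q₀) (R p u : ℝ) : ℝ≥0∞ :=
  ∫⁻ v in Set.Ioi (vR M ρ R u), ENNReal.ofReal ((S.rf u v) ^ p * ‖S.Dvψ u v‖^2)

/-- `Ẽ_p(u) = E_p[ψ](u) + E(u)` -/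
def Etilde (S : Solution M ρ q₀) (R p u : ℝ) : ℝ≥0∞ := S.Ep R p u + S.E R u

/-- flux density along the event horizon: `liminf_{u→∞} (r²|D_vφ|²)(u,v)` -/
def hFlux (S : Solution M ρ q₀) (v : ℝ) : ℝ≥0∞ :=
  Filter.liminf (fun u => ENNReal.ofReal ((S.rf u v)^2 * ‖S.Dvφ u v‖^2)) Filter.atTop

/-- flux density along null infinity: `limsup_{v→∞} (r²|D_uφ|²)(u,v)` -/
def iFlux (S : Solution M ρ q₀) (u : ℝ) : ℝ≥0∞ :=
  Filter.limsup (fun v => ENNReal.ofReal ((S.rf u v)^2 * ‖S.Duφ u v‖^2)) Filter.atTop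

/-- `E_deg⁺(u₁,u₂)` -/
def EdegPlus (S : Solution M ρ q₀) (R u₁ u₂ : ℝ) : ℝ≥0∞ :=
  S.Edeg R u₁ + S.Edeg R u₂
  + (∫⁻ v in Set.Ioc (vR M ρ R u₁) (vR M ρ R u₂), S.hFlux v)
  + (∫⁻ u in Set.Ioc u₁ u₂, S.iFlux u)

/-- the initial energy `ℰ` on `Σ₀ = {t = 0}` -/
def calE (S : Solution M ρ q₀) : ℝ≥0∞ :=
  ∫⁻ x : ℝ, ENNReal.ofReal
    (((S.rf (-x/2) (x/2))^2 * ‖S.Duφ (-x/2) (x/2)‖^2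
      + (S.rf (-x/2) (x/2))^2 * ‖S.Dvφ (-x/2) (x/2)‖^2) / Omega2 M ρ (S.rf (-x/2) (x/2)))

/-- the initial `r^p`-weighted energy `ℰ_p` -/
def calEp (S : Solution M ρ q₀) (p : ℝ) : ℝ≥0∞ :=
  ∫⁻ x : ℝ, ENNReal.ofReal
    ((S.rf (-x/2) (x/2)) ^ p * ‖S.Dvψ (-x/2) (x/2)‖^2
      + (S.rf (-x/2) (x/2)) ^ p * ‖S.Duψ (-x/2) (x/2)‖^2
      + Omega2 M ρ (S.rf (-x/2) (x/2)) * (S.rf (-x/2) (x/2)) ^ p * ‖S.φ (-x/2) (x/2)‖^2)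

/-- `ℰ̃_p = ℰ_p + ℰ` -/
def calEtilde (S : Solution M ρ q₀) (p : ℝ) : ℝ≥0∞ := S.calEp p + S.calE

end Solution

/-- energy boundedness with constant `Cb` -/
def EnergyBound (S : Solution M ρ q₀) (R Cb : ℝ) : Prop :=
  S.E R (u0 M ρ R) < ⊤ ∧
    ∀ u₁ u₂ : ℝ, u0 M ρ R ≤ u₁ → u₁ ≤ u₂ → S.E R u₂ ≤ ENNReal.ofReal Cb * S.E R u₁

/-- the Morawetz (integrated local energy decay) estimate with constant `Cm` -/
def MorawetzBound (S : Solution M ρ q₀) (R Cm : ℝ) : Prop :=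
  ∀ u₁ u₂ : ℝ, u0 M ρ R ≤ u₁ → u₁ < u₂ →
    (∫⁻ p in Dset M ρ R u₁ u₂ ∩ {p : ℝ × ℝ | S.rf p.1 p.2 ≤ R},
        ENNReal.ofReal
          (((S.rf p.1 p.2)^2 * ‖S.Dvφ p.1 p.2‖^2
            + (S.rf p.1 p.2)^2 * ‖S.Duφ p.1 p.2‖^2 / (Omega2 M ρ (S.rf p.1 p.2))^2
            + ‖S.φ p.1 p.2‖^2) * Omega2 M ρ (S.rf p.1 p.2)))
      ≤ ENNReal.ofReal Cm * S.E R u₁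

/-- the scalar field vanishes at spatial infinity on the initial hypersurface -/
def InitialFieldVanishes (S : Solution M ρ q₀) : Prop :=
  Filter.Tendsto (fun x : ℝ => S.φ (-x/2) (x/2)) Filter.atTop (nhds (0:ℂ))

/-- `e₀` is the initial asymptotic charge -/
def InitialCharge (S : Solution M ρ q₀) (e₀ : ℝ) : Prop :=
  Filter.Tendsto (fun x : ℝ => S.Q (-x/2) (x/2)) Filter.atTop (nhds e₀)

/-- for each `u ≥ u₀(R)`, `φ(u,v) → 0` and `r|φ|²(u,v) → 0` as `v → ∞` -/
def FieldVanishes (S : Solution M ρ q₀) (R : ℝ) : Prop :=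
  ∀ u : ℝ, u0 M ρ R ≤ u →
    Filter.Tendsto (fun v => S.φ u v) Filter.atTop (nhds (0:ℂ)) ∧
    Filter.Tendsto (fun v => S.rf u v * ‖S.φ u v‖^2) Filter.atTop (nhds (0:ℝ))

/-- for each `u ≥ u₀(R)`, `φ(u,v) → 0` as `v → ∞` -/
def PhiVanishes (S : Solution M ρ q₀) (R : ℝ) : Prop :=
  ∀ u : ℝ, u0 M ρ R ≤ u → Filter.Tendsto (fun v => S.φ u v) Filter.atTop (nhds (0:ℂ))

/-- for each `u ≥ u₀(R)`, `sup_{v ≥ v_R(u)} |ψ(u,v)| < ∞` -/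
def PsiBounded (S : Solution M ρ q₀) (R : ℝ) : Prop :=
  ∀ u : ℝ, u0 M ρ R ≤ u → ∃ B : ℝ, ∀ v : ℝ, vR M ρ R u ≤ v → ‖S.ψ u v‖ ≤ B

/-- `|Q| < δ` on `D(u₀(R),∞)` -/
def ChargeBelow (S : Solution M ρ q₀) (R δ : ℝ) : Prop :=
  ∀ p ∈ DsetInf M ρ R (u0 M ρ R), |S.Q p.1 p.2| < δ

/-- `|Q − e| < δ` on `D(u₀(R),∞)` -/
def ChargeNear (S : Solution M ρ q₀) (R e δ : ℝ) : Prop :=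
  ∀ p ∈ DsetInf M ρ R (u0 M ρ R), |S.Q p.1 p.2 - e| < δ

/-- the radial d'Alembertian on the Reissner–Nordström exterior -/
def Box (M ρ : ℝ) (f : ℝ → ℝ) (r : ℝ) : ℝ :=
  Omega2 M ρ r * deriv (deriv f) r
    + (deriv (fun s => Omega2 M ρ s) r + 2 * Omega2 M ρ r / r) * deriv f r

end RN

open RN

/-! Writing `D = r²Ω² = r² − 2Mr + ρ²`, one has `□f = r⁻²(D f′)′`, and for `f = Ω² r^{-α}`
this gives `□f = r^{-α-2} ((α+2)(α+3)Ω⁴ − 6(α+2)Ω²(1 − M/r) + 4(1 − M/r)² + 2Ω²)`.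
On `[R₁, ∞)` the function `Ω²` is bounded below by `Ω²(R₁) > 0` and `1 − M/r ≤ 1`, so the
term quadratic in `α` dominates once `α` is large. -/

namespace RN

theorem hasDerivAt_omega2 (M ρ : ℝ) {r : ℝ} (hr : r ≠ 0) :
    HasDerivAt (Omega2 M ρ) (2 * M / r ^ 2 - 2 * ρ ^ 2 / r ^ 3) r := by
  have h : HasDerivAt (fun t => 1 - 2 * M / t + ρ ^ 2 / t ^ 2) _ r :=
    ((hasDerivAt_const r 1).sub ((hasDerivAt_const r (2 * M)).div (hasDerivAt_id r) hr)).add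
      ((hasDerivAt_const r (ρ ^ 2)).div (hasDerivAt_pow 2 r) (pow_ne_zero 2 hr))
  refine h.congr_deriv ?_
  simp only [id_eq]
  field_simp
  ring

theorem box_eq_of_hasDerivAt {M ρ : ℝ} {f f' : ℝ → ℝ} {f'' r : ℝ} (hr : r ≠ 0)
    (hf : ∀ᶠ s in 𝓝 r, HasDerivAt f (f' s) s) (hf' : HasDerivAt f' f'' r) :
    Box M ρ f r = Omega2 M ρ r * f'' + 2 * (1 - M / r) / r * f' r := by
  have hderiv : deriv f =ᶠ[𝓝 r] f' := hf.mono fun s hs => hs.deriv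
  rw [Box, hderiv.deriv_eq, hf'.deriv, hf.self_of_nhds.deriv,
    (hasDerivAt_omega2 M ρ hr).deriv]
  congr 2
  unfold Omega2
  field_simp
  ring

theorem hasDerivAt_rpow_mul_quadratic_inv (q a b c : ℝ) {s : ℝ} (hs : 0 < s) :
    HasDerivAt (fun t => t ^ q * (a + b / t + c / t ^ 2))
      (s ^ (q - 1) * (q * a + (q - 1) * b / s + (q - 2) * c / s ^ 2)) s := by
  have h : HasDerivAt (fun t => t ^ q * (a + b / t + c / t ^ 2)) _ s :=
    (Real.hasDerivAt_rpow_const (p := q) (Or.inl hs.ne')).mul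
      (((hasDerivAt_const s a).add ((hasDerivAt_const s b).div (hasDerivAt_id s) hs.ne')).add
        ((hasDerivAt_const s c).div (hasDerivAt_pow 2 s) (pow_ne_zero 2 hs.ne')))
  refine h.congr_deriv ?_
  simp only [id_eq]
  rw [Real.rpow_sub_one hs.ne']
  field_simp
  ring

theorem box_omega2_mul_rpow (M ρ α : ℝ) {r : ℝ} (hr : 0 < r) :
    Box M ρ (fun s => Omega2 M ρ s * s ^ (-α)) r =
      r ^ (-α - 2) * ((α + 2) * (α + 3) * Omega2 M ρ r ^ 2
        - 6 * (α + 2) * Omega2 M ρ r * (1 - M / r) + 4 * (1 - M / r) ^ 2 + 2 * Omega2 M ρ r) := by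
  have hf_eq : (fun s => Omega2 M ρ s * s ^ (-α))
      = fun s => s ^ (-α) * (1 + (-2 * M) / s + ρ ^ 2 / s ^ 2) := by
    funext s; rw [Omega2]; ring
  have hderiv : ∀ᶠ s in 𝓝 r, HasDerivAt (fun s => Omega2 M ρ s * s ^ (-α))
      (s ^ (-α - 1) * (-α * 1 + (-α - 1) * (-2 * M) / s + (-α - 2) * ρ ^ 2 / s ^ 2)) s := by
    filter_upwards [Ioi_mem_nhds hr] with s hs
    rw [hf_eq]
    exact hasDerivAt_rpow_mul_quadratic_inv _ _ _ _ hs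
  rw [box_eq_of_hasDerivAt hr.ne' hderiv (hasDerivAt_rpow_mul_quadratic_inv _ _ _ _ hr)]
  have e1 : r ^ (-α - 1) = r ^ (-α - 2) * r := by
    rw [← Real.rpow_add_one hr.ne']; ring_nf
  have e2 : r ^ (-α - 1 - 1) = r ^ (-α - 2) := by ring_nf
  rw [e1, e2]
  unfold Omega2
  field_simp
  ring

theorem omega2_pos_of_rPlus_lt {M ρ r : ℝ} (h : rPlus M ρ < r) : 0 < Omega2 M ρ r := by
  rcases eq_or_ne r 0 with rfl | hr
  · simp [Omega2]
  have hD : M ^ 2 - ρ ^ 2 < (r - M) ^ 2 := Real.lt_sq_of_sqrt_lt (by unfold rPlus at h; linarith)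
  have e : Omega2 M ρ r = ((r - M) ^ 2 - (M ^ 2 - ρ ^ 2)) / r ^ 2 := by
    unfold Omega2; field_simp; ring
  rw [e]
  exact div_pos (by linarith) (by positivity)

theorem omega2_le_omega2_of_le {M ρ R r : ℝ} (hR : 0 < R) (hρ : ρ ^ 2 ≤ M * R) (hRr : R ≤ r) :
    Omega2 M ρ R ≤ Omega2 M ρ r := by
  have hr : 0 < r := hR.trans_le hRr
  have e : Omega2 M ρ r - Omega2 M ρ R
      = (r - R) * (M * r * R - ρ ^ 2 * r + (M * r * R - ρ ^ 2 * R)) / (r ^ 2 * R ^ 2) := by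
    unfold Omega2; field_simp; ring
  have hMr : ρ ^ 2 * r ≤ M * r * R := by nlinarith
  have hMR : ρ ^ 2 * R ≤ M * r * R := by nlinarith
  have : 0 ≤ Omega2 M ρ r - Omega2 M ρ R := by
    rw [e]; apply div_nonneg (mul_nonneg (by linarith) (by linarith)) (by positivity)
  linarith

theorem lt_box_polynomial {Δ α w₀ w v : ℝ} (hΔ : 0 < Δ) (hw₀ : 0 < w₀) (hw : w₀ ≤ w)
    (hv : v ≤ 1) (hα : 1 + (6 + Δ) / w₀ ≤ α) :
    Δ < (α + 2) * (α + 3) * w ^ 2 - 6 * (α + 2) * w * v + 4 * v ^ 2 + 2 * w := by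
  have hαw₀ : 6 + Δ + w₀ ≤ α * w₀ := by
    have := (div_le_iff₀ hw₀).mp (le_sub_iff_add_le'.mpr hα)
    nlinarith
  have hα0 : 0 ≤ α := by nlinarith
  have hgap : Δ < (α + 3) * w - 6 * v := by nlinarith
  have hlead : 1 ≤ (α + 2) * w := by nlinarith
  calc Δ ≤ (α + 2) * w * Δ := by nlinarith
    _ < (α + 2) * w * ((α + 3) * w - 6 * v) := by gcongr
    _ ≤ _ := by nlinarith [sq_nonneg v]

end RN

/-- positivity of the Reissner–Nordström d'Alembertian of Ω²r^{−α}
for large α. -/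
theorem statement9 (M ρ : ℝ) (hM : 0 < M) (hρ : |ρ| < M) :
    ∀ Δ : ℝ, 0 < Δ → ∀ R₁ : ℝ, rPlus M ρ < R₁ →
      ∃ αt : ℝ, 1 < αt ∧ ∀ α : ℝ, αt ≤ α → ∀ r : ℝ, R₁ ≤ r →
        Δ * r ^ (-α - 2) < Box M ρ (fun s => Omega2 M ρ s * s ^ (-α)) r := by
  intro Δ hΔ R₁ hR₁
  have hw₀ : 0 < Omega2 M ρ R₁ := omega2_pos_of_rPlus_lt hR₁
  have hMR : M < R₁ := (le_add_of_nonneg_right (Real.sqrt_nonneg _)).trans_lt hR₁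
  have hρR : ρ ^ 2 ≤ M * R₁ := by nlinarith [sq_lt_sq' (abs_lt.mp hρ).1 (abs_lt.mp hρ).2]
  refine ⟨1 + (6 + Δ) / Omega2 M ρ R₁, lt_add_of_pos_right 1 (div_pos (by linarith) hw₀),
    fun α hα r hRr => ?_⟩
  have hr : 0 < r := by linarith
  rw [box_omega2_mul_rpow M ρ α hr, mul_comm Δ]
  exact mul_lt_mul_of_pos_left
    (lt_box_polynomial hΔ hw₀ (omega2_le_omega2_of_le (hM.trans hMR) hρR hRr)
      (sub_le_self _ (div_nonneg hM.le hr.le)) hα)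
    (Real.rpow_pos_of_pos hr _)
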